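/- arXiv:1008.2420 — 2 statements merged into one kernel-verified Lean document; each statement's English description precedes it below -/
import Mathlib

section
/- Let 0 < α < 1 and ζ > 0 be fixed, let γ_1 ∼ Exp(1) be independent of the generalized gamma subordinator τ_α, and let β_{1−α,α} ∼ Beta(1−α, α) be independent of both. Then β_{1−α,α} · γ_1/(γ_1 + τ_α(ζ)) =^d β_{1−α,α} · (1 − ζ^{1/α}/(ζ + γ_1)^{1/α}), where on each side the factors are independent. -/
open MeasureTheory ProbabilityTheory

/-- The Beta(a,b) distribution on `(0,1)`. -/
noncomputable def betaMeasureOnUnit (a b : ℝ) : Measure ℝ :=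
  (volume.restrict (Set.Ioo (0 : ℝ) 1)).withDensity
    (fun x => ENNReal.ofReal
      (Real.Gamma (a + b) / (Real.Gamma a * Real.Gamma b) * (x ^ (a - 1) * (1 - x) ^ (b - 1))))

/-! For `u ∈ [0, 1)`, both `G / (G + X)` and `1 - ζ^{1/α} / (ζ + G)^{1/α}` exceed `u` with
probability `exp (-(ζ (1 - u)^{-α} - ζ))`. On the left, `{u < G / (G + X)} = {c X < G}` with
`c = u / (1 - u)`, and since `G` is an independent exponential clock this event has probability
`E e^{-c X}`, the Laplace transform of `τ_α(ζ)` at `c`, with `1 + c = (1 - u)⁻¹`. On the right the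
event is `{G > ζ (1 - u)^{-α} - ζ}`. Hence the two factors multiplying the Beta variable have the
same law, and independence turns each product law into the image of a product measure. -/

open Set Real

namespace ProbabilityTheory

lemma expMeasure_Ioi {r t : ℝ} (hr : 0 < r) (ht : 0 ≤ t) :
    expMeasure r (Ioi t) = ENNReal.ofReal (exp (-(r * t))) := by
  have := isProbabilityMeasure_expMeasure hr
  rw [← compl_Iic, ← ofReal_measureReal, probReal_compl_eq_one_sub measurableSet_Iic,
    ← cdf_eq_real, cdf_expMeasure_eq hr, if_pos ht, sub_sub_cancel]

lemma ae_pos_expMeasure {r : ℝ} (hr : 0 < r) : ∀ᵐ x ∂expMeasure r, 0 < x := by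
  have := isProbabilityMeasure_expMeasure hr
  have hIic : {x : ℝ | ¬0 < x} = Iic 0 := by ext x; simp
  rw [ae_iff, hIic, ← ofReal_cdf, cdf_expMeasure_eq hr, if_pos le_rfl]
  simp

end ProbabilityTheory

lemma MeasureTheory.Measure.ext_of_Ioi_of_ae_mem_Ioo {μ ν : Measure ℝ} [IsProbabilityMeasure μ]
    [IsProbabilityMeasure ν] {a b : ℝ} (hμ : ∀ᵐ x ∂μ, x ∈ Ioo a b) (hν : ∀ᵐ x ∂ν, x ∈ Ioo a b)
    (h : ∀ u ∈ Ico a b, μ (Ioi u) = ν (Ioi u)) : μ = ν := by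
  have hIoi : ∀ u, μ (Ioi u) = ν (Ioi u) := by
    intro u
    rcases lt_or_ge u a with hua | hau
    · have hsub : Ioo a b ⊆ Ioi u := fun x hx => hua.trans hx.1
      rw [(mem_ae_iff_prob_eq_one measurableSet_Ioi).1 (hμ.mono hsub),
        (mem_ae_iff_prob_eq_one measurableSet_Ioi).1 (hν.mono hsub)]
    rcases lt_or_ge u b with hub | hbu
    · exact h u ⟨hau, hub⟩
    · have hdisj : ∀ x ∈ Ioo a b, x ∉ Ioi u := fun x hx => (hx.2.trans_le hbu).not_gt
      rw [measure_eq_zero_iff_ae_notMem.2 (hμ.mono hdisj),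
        measure_eq_zero_iff_ae_notMem.2 (hν.mono hdisj)]
  refine Measure.ext_of_Iic μ ν fun u => ?_
  rw [← compl_Ioi, prob_compl_eq_one_sub measurableSet_Ioi, prob_compl_eq_one_sub measurableSet_Ioi,
    hIoi]

lemma lt_div_add_iff {u g x : ℝ} (hu : u < 1) (hgx : 0 < g + x) :
    u < g / (g + x) ↔ u / (1 - u) * x < g := by
  rw [lt_div_iff₀ hgx, div_mul_eq_mul_div, div_lt_iff₀ (sub_pos.2 hu)]
  constructor <;> intro h <;> linarith

lemma lt_one_sub_rpow_div_iff {α ζ u x : ℝ} (hα : 0 < α) (hζ : 0 ≤ ζ) (hu : u < 1)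
    (hζx : 0 < ζ + x) : u < 1 - ζ ^ (1 / α) / (ζ + x) ^ (1 / α) ↔ ζ / (1 - u) ^ α - ζ < x := by
  have h1u : 0 < (1 - u) ^ α := rpow_pos_of_pos (sub_pos.2 hu) α
  rw [← div_rpow hζ hζx.le, one_div, lt_sub_comm, rpow_inv_lt_iff_of_pos (by positivity)
    (sub_pos.2 hu).le hα, div_lt_iff₀ hζx, sub_lt_iff_lt_add, div_lt_iff₀ h1u, mul_comm,
    add_comm]

lemma ProbabilityTheory.IndepFun.measure_lt_eq_integral_exp {Ω : Type*} [MeasurableSpace Ω]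
    {μ : Measure Ω} [IsProbabilityMeasure μ] {Y G : Ω → ℝ} {r : ℝ} (hr : 0 < r)
    (hYG : IndepFun Y G μ) (hY : Measurable Y) (hG : Measurable G)
    (hGlaw : μ.map G = expMeasure r) (hYnn : ∀ᵐ a ∂μ, 0 ≤ Y a) :
    μ {a | Y a < G a} = ENNReal.ofReal (∫ a, exp (-(r * Y a)) ∂μ) := by
  have := isProbabilityMeasure_expMeasure hr
  have hS : MeasurableSet {p : ℝ × ℝ | p.1 < p.2} := measurableSet_lt measurable_fst measurable_snd
  have hexp : Measurable fun y : ℝ => ENNReal.ofReal (exp (-(r * y))) := by fun_prop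
  have hint : Integrable (fun a => exp (-(r * Y a))) μ := by
    refine .of_bound (by fun_prop) 1 (hYnn.mono fun a ha => ?_)
    rw [norm_of_nonneg (exp_pos _).le, exp_le_one_iff, neg_nonpos]
    positivity
  calc μ {a | Y a < G a}
      = ((μ.map Y).prod (expMeasure r)) {p : ℝ × ℝ | p.1 < p.2} := by
        rw [← hGlaw, ← (indepFun_iff_map_prod_eq_prod_map_map hY.aemeasurable
          hG.aemeasurable).1 hYG, Measure.map_apply (hY.prodMk hG) hS]
        rfl
    _ = ∫⁻ y, ENNReal.ofReal (exp (-(r * y))) ∂μ.map Y := by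
        rw [Measure.prod_apply hS]
        refine lintegral_congr_ae ?_
        filter_upwards [(ae_map_iff hY.aemeasurable measurableSet_Ici).2 hYnn] with y hy
        exact expMeasure_Ioi hr hy
    _ = ENNReal.ofReal (∫ a, exp (-(r * Y a)) ∂μ) := by
        rw [lintegral_map hexp hY, ofReal_integral_eq_lintegral_ofReal hint
          (.of_forall fun a => (exp_pos _).le)]

lemma ProbabilityTheory.IndepFun.map_comp_prodMk_eq {Ω E F K H : Type*} [MeasurableSpace Ω]
    [MeasurableSpace E] [MeasurableSpace F] [MeasurableSpace K] [MeasurableSpace H]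
    {μ : Measure Ω} [IsProbabilityMeasure μ] {B : Ω → E} {U : Ω → F} {ν : Measure K} [SFinite ν]
    {g : K → F} {f : E × F → H} (hBU : IndepFun B U μ) (hB : Measurable B) (hU : Measurable U)
    (hg : Measurable g) (hf : Measurable f) (hUlaw : μ.map U = ν.map g) :
    μ.map (fun a => f (B a, U a)) = ((μ.map B).prod ν).map (fun p => f (p.1, g p.2)) := by
  have hprod : (μ.map B).prod (ν.map g) = ((μ.map B).prod ν).map (Prod.map id g) := by
    simpa using Measure.map_prod_map (μ.map B) ν measurable_id hg
  calc μ.map (fun a => f (B a, U a))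
      = (μ.map fun a => (B a, U a)).map f := (Measure.map_map hf (hB.prodMk hU)).symm
    _ = ((μ.map B).prod (ν.map g)).map f := by
        rw [(indepFun_iff_map_prod_eq_prod_map_map hB.aemeasurable hU.aemeasurable).1 hBU, hUlaw]
    _ = ((μ.map B).prod ν).map (fun p => f (p.1, g p.2)) := by
        rw [hprod, Measure.map_map hf (measurable_id.prodMap hg)]
        rfl

section StructuralDistribution

variable {α ζ : ℝ}

lemma expMeasure_lt_one_sub_rpow_div (hα : 0 < α) (hζ : 0 < ζ) {u : ℝ} (hu : u ∈ Ico 0 1) :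
    expMeasure 1 {x | u < 1 - ζ ^ (1 / α) / (ζ + x) ^ (1 / α)}
      = ENNReal.ofReal (exp (-(ζ / (1 - u) ^ α - ζ))) := by
  have ht : 0 ≤ ζ / (1 - u) ^ α - ζ := by
    rw [sub_nonneg, le_div_iff₀ (rpow_pos_of_pos (sub_pos.2 hu.2) α)]
    exact mul_le_of_le_one_right hζ.le
      (rpow_le_one (sub_nonneg.2 hu.2.le) (by linarith [hu.1]) hα.le)
  rw [← one_mul (ζ / (1 - u) ^ α - ζ), ← expMeasure_Ioi one_pos ht]
  refine measure_congr (Filter.eventuallyEq_set.2 ?_)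
  filter_upwards [ae_pos_expMeasure one_pos] with x hx
  exact lt_one_sub_rpow_div_iff hα hζ.le hu.2 (by linarith)

variable {Ω : Type*} [MeasurableSpace Ω] {μ : Measure Ω} [IsProbabilityMeasure μ] {G X : Ω → ℝ}

lemma measure_lt_div_add (hG : Measurable G) (hX : Measurable X)
    (hGlaw : μ.map G = expMeasure 1) (hGX : IndepFun G X μ) (hXpos : ∀ᵐ a ∂μ, 0 < X a)
    (hXlap : ∀ ω : ℝ, 0 ≤ ω → ∫ a, exp (-ω * X a) ∂μ = exp (-ζ * ((1 + ω) ^ α - 1)))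
    {u : ℝ} (hu : u ∈ Ico 0 1) :
    μ {a | u < G a / (G a + X a)} = ENNReal.ofReal (exp (-(ζ / (1 - u) ^ α - ζ))) := by
  have h1u : 0 < 1 - u := sub_pos.2 hu.2
  set c := u / (1 - u) with hc
  have hc0 : 0 ≤ c := div_nonneg hu.1 h1u.le
  have hGpos : ∀ᵐ a ∂μ, 0 < G a :=
    (ae_map_iff hG.aemeasurable measurableSet_Ioi).1 (hGlaw ▸ ae_pos_expMeasure one_pos)
  have hcXG : IndepFun (fun a => c * X a) G μ :=
    hGX.symm.comp (φ := fun x => c * x) (ψ := id) (measurable_const_mul c) measurable_id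
  calc μ {a | u < G a / (G a + X a)}
      = μ {a | c * X a < G a} := by
        refine measure_congr (Filter.eventuallyEq_set.2 ?_)
        filter_upwards [hGpos, hXpos] with a hGa hXa
        exact lt_div_add_iff hu.2 (by linarith)
    _ = ENNReal.ofReal (∫ a, exp (-(1 * (c * X a))) ∂μ) :=
        hcXG.measure_lt_eq_integral_exp one_pos (hX.const_mul c) hG hGlaw
          (hXpos.mono fun a ha => by positivity)
    _ = ENNReal.ofReal (exp (-(ζ / (1 - u) ^ α - ζ))) := by
        have h1c : 1 + c = 1 / (1 - u) := by rw [hc]; field_simp; ring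
        simp_rw [one_mul, ← neg_mul]
        rw [hXlap c hc0, h1c, div_rpow zero_le_one h1u.le, one_rpow]
        congr 3
        ring

lemma map_div_add_eq_map_expMeasure (hα : 0 < α) (hζ : 0 < ζ) (hG : Measurable G)
    (hX : Measurable X) (hGlaw : μ.map G = expMeasure 1) (hGX : IndepFun G X μ)
    (hXpos : ∀ᵐ a ∂μ, 0 < X a)
    (hXlap : ∀ ω : ℝ, 0 ≤ ω → ∫ a, exp (-ω * X a) ∂μ = exp (-ζ * ((1 + ω) ^ α - 1))) :
    μ.map (fun a => G a / (G a + X a))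
      = (expMeasure 1).map (fun x => 1 - ζ ^ (1 / α) / (ζ + x) ^ (1 / α)) := by
  have := isProbabilityMeasure_expMeasure one_pos
  have hU : Measurable fun a => G a / (G a + X a) := hG.div (hG.add hX)
  have hg : Measurable fun x : ℝ => 1 - ζ ^ (1 / α) / (ζ + x) ^ (1 / α) := by fun_prop
  have := Measure.isProbabilityMeasure_map (μ := μ) hU.aemeasurable
  have := Measure.isProbabilityMeasure_map (μ := expMeasure 1) hg.aemeasurable
  have hGpos : ∀ᵐ a ∂μ, 0 < G a :=
    (ae_map_iff hG.aemeasurable measurableSet_Ioi).1 (hGlaw ▸ ae_pos_expMeasure one_pos)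
  refine Measure.ext_of_Ioi_of_ae_mem_Ioo (a := 0) (b := 1) ?_ ?_ fun u hu => ?_
  · refine (ae_map_iff hU.aemeasurable measurableSet_Ioo).2 ?_
    filter_upwards [hGpos, hXpos] with a hGa hXa
    exact ⟨by positivity, (div_lt_one (by positivity)).2 (by linarith)⟩
  · refine (ae_map_iff hg.aemeasurable measurableSet_Ioo).2 ?_
    filter_upwards [ae_pos_expMeasure one_pos] with x hx
    have hlt : ζ ^ (1 / α) < (ζ + x) ^ (1 / α) :=
      rpow_lt_rpow hζ.le (by linarith) (by positivity)
    have hpos : 0 < ζ ^ (1 / α) / (ζ + x) ^ (1 / α) := by positivity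
    have hlt1 : ζ ^ (1 / α) / (ζ + x) ^ (1 / α) < 1 := (div_lt_one (by positivity)).2 hlt
    exact ⟨by linarith, by linarith⟩
  · rw [Measure.map_apply hU measurableSet_Ioi, Measure.map_apply hg measurableSet_Ioi]
    exact (measure_lt_div_add hG hX hGlaw hGX hXpos hXlap hu).trans
      (expMeasure_lt_one_sub_rpow_div hα hζ hu).symm

end StructuralDistribution

theorem stmt9_general {Ω : Type*} [MeasureSpace Ω] [IsProbabilityMeasure (ℙ : Measure Ω)]
    (α ζ : ℝ) (hα0 : 0 < α) (hζ : 0 < ζ)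
    (B G X : Ω → ℝ) (hBm : Measurable B) (hGm : Measurable G) (hXm : Measurable X)
    (hB : Measure.map B ℙ = betaMeasureOnUnit (1 - α) α)
    (hG : Measure.map G ℙ = expMeasure 1)
    (hXpos : ∀ᵐ a ∂ℙ, 0 < X a)
    (hXlap : ∀ ω : ℝ, 0 ≤ ω →
      ∫ a, Real.exp (-ω * X a) ∂ℙ = Real.exp (-ζ * ((1 + ω) ^ α - 1)))
    (hind : iIndepFun (m := fun _ => (inferInstance : MeasurableSpace ℝ)) ![B, G, X] ℙ) :
    Measure.map (fun a => B a * (G a / (G a + X a))) ℙ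
      = ((betaMeasureOnUnit (1 - α) α).prod (expMeasure 1)).map
          (fun p => p.1 * (1 - ζ ^ (1 / α) / (ζ + p.2) ^ (1 / α))) := by
  have := isProbabilityMeasure_expMeasure one_pos
  have hvm : ∀ i, Measurable (![B, G, X] i) := by
    intro i
    fin_cases i
    exacts [hBm, hGm, hXm]
  have hGX : IndepFun G X ℙ := hind.indepFun (show (1 : Fin 3) ≠ 2 by decide)
  have hBU : IndepFun B (fun a => G a / (G a + X a)) ℙ :=
    ((hind.indepFun_prodMk hvm 1 2 0 (by decide) (by decide)).comp
      (measurable_fst.div (measurable_fst.add measurable_snd)) measurable_id).symm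
  rw [← hB]
  exact hBU.map_comp_prodMk_eq (f := fun p => p.1 * p.2) hBm (hGm.div (hGm.add hXm))
    (by fun_prop) (by fun_prop) (map_div_add_eq_map_expMeasure hα0 hζ hGm hXm hG hGX hXpos hXlap)

/-- Structural distribution of a `ℙ_α(ζ)` sequence: with `B ~ Beta(1-α,α)`, `G ~ Exp(1)`
and `X = τ_α(ζ)` (Laplace transform `e^{-ζ((1+ω)^α-1)}`) all independent,
`B · G/(G + X) =ᵈ B · (1 - ζ^{1/α}/(ζ+G)^{1/α})`, with independent factors on each side. -/
theorem stmt9 {Ω : Type*} [MeasureSpace Ω] [IsProbabilityMeasure (ℙ : Measure Ω)]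
    (α ζ : ℝ) (hα0 : 0 < α) (hα1 : α < 1) (hζ : 0 < ζ)
    (B G X : Ω → ℝ) (hBm : Measurable B) (hGm : Measurable G) (hXm : Measurable X)
    (hB : Measure.map B ℙ = betaMeasureOnUnit (1 - α) α)
    (hG : Measure.map G ℙ = expMeasure 1)
    (hXpos : ∀ᵐ a ∂ℙ, 0 < X a)
    (hXlap : ∀ ω : ℝ, 0 ≤ ω →
      ∫ a, Real.exp (-ω * X a) ∂ℙ = Real.exp (-ζ * ((1 + ω) ^ α - 1)))
    (hind : iIndepFun (m := fun _ => (inferInstance : MeasurableSpace ℝ)) ![B, G, X] ℙ) :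
    Measure.map (fun a => B a * (G a / (G a + X a))) ℙ
      = ((betaMeasureOnUnit (1 - α) α).prod (expMeasure 1)).map
          (fun p => p.1 * (1 - ζ ^ (1 / α) / (ζ + p.2) ^ (1 / α))) :=
  stmt9_general α ζ hα0 hζ B G X hBm hGm hXm hB hG hXpos hXlap hind
end

section
/- Let 0 < α < 1, 0 < δ < 1, ζ > 0, y ∈ [0,1], and let τ_δ, τ_α be independent generalized gamma subordinators with exponents ψ_δ, ψ_α. Then −log E[exp(−ω_1 τ_α(τ_δ(ζ)) − ω_2 τ_α(τ_δ(ζ) y))] = ζ [ ( y(1+ω_1+ω_2)^α + (1−y)(1+ω_1)^α )^δ − 1 ] for all ω_1, ω_2 ≥ 0. -/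
/-!
Conditionally on `S = s`, the independent increments of `τ` give
`E[exp(-ω₁ τ(s) - ω₂ τ(sy))] = exp(-c s)` with `c = y((1+ω₁+ω₂)^α - 1) + (1-y)((1+ω₁)^α - 1)`,
and the Laplace transform of `S` at `c` gives the claim, as
`1 + c = y(1+ω₁+ω₂)^α + (1-y)(1+ω₁)^α`.

Evaluation of a path at a random time is not measurable for the product σ-algebra on `ℝ → ℝ`,
so the conditioning is done by rounding `S` up and down to the grid `2⁻ⁿℕ`. For a time with
countably many values it is Fubini for the product law of `(τ, S)`; since the integrand is
antitone in time, it is squeezed between the two rounded versions, whose expectations both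
converge to `E[exp(-c S)]` by dominated convergence.
-/

open MeasureTheory ProbabilityTheory

/-- A (two-point) generalized gamma subordinator of index `β`: an increasing process
started at `0` with independent increments whose increments over `[s,t]` have Laplace
transform `e^{-(t-s)((1+ω)^β - 1)}`. -/
def IsGGSubordinator {Ω : Type*} [MeasurableSpace Ω] (P : Measure Ω)
    (τ : Ω → ℝ → ℝ) (β : ℝ) : Prop :=
  Measurable (fun a => τ a) ∧
  (∀ a, τ a 0 = 0) ∧ (∀ a, Monotone (τ a)) ∧
  (∀ s t : ℝ, 0 ≤ s → s ≤ t →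
    IndepFun (fun a => τ a s) (fun a => τ a t - τ a s) P) ∧
  (∀ s t ω : ℝ, 0 ≤ s → s ≤ t → 0 ≤ ω →
    ∫ a, Real.exp (-ω * (τ a t - τ a s)) ∂P = Real.exp (-(t - s) * ((1 + ω) ^ β - 1)))

open Filter Topology Set

theorem integral_eq_of_forall_ae_le_of_tendsto {α : Type*} [MeasurableSpace α] {μ : Measure α}
    {f : α → ℝ} {l u : ℕ → α → ℝ} {L : ℝ}
    (hl : ∀ n, Integrable (l n) μ) (hu : ∀ n, Integrable (u n) μ)
    (hlf : ∀ n, ∀ᵐ a ∂μ, l n a ≤ f a) (hfu : ∀ n, ∀ᵐ a ∂μ, f a ≤ u n a)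
    (hlL : Tendsto (fun n => ∫ a, l n a ∂μ) atTop (𝓝 L))
    (huL : Tendsto (fun n => ∫ a, u n a ∂μ) atTop (𝓝 L)) :
    ∫ a, f a ∂μ = L := by
  -- measurable stand-ins for `f`, which need not be measurable
  set U := fun a => ⨆ n, l n a
  set V := fun a => ⨅ n, u n a
  have hchain : ∀ᵐ a ∂μ, ∀ n, l n a ≤ U a ∧ U a ≤ f a ∧ f a ≤ V a ∧ V a ≤ u n a := by
    filter_upwards [ae_all_iff.2 hlf, ae_all_iff.2 hfu] with a hla hua
    have hbdd : BddAbove (range fun n => l n a) := ⟨f a, forall_mem_range.2 hla⟩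
    have hbdd' : BddBelow (range fun n => u n a) := ⟨f a, forall_mem_range.2 hua⟩
    exact fun n => ⟨le_ciSup hbdd n, ciSup_le hla, le_ciInf hua, ciInf_le hbdd' n⟩
  have integral_eq {g : α → ℝ} (hg : AEMeasurable g μ)
      (hlg : ∀ n, ∀ᵐ a ∂μ, l n a ≤ g a) (hgu : ∀ n, ∀ᵐ a ∂μ, g a ≤ u n a) :
      Integrable g μ ∧ ∫ a, g a ∂μ = L := by
    have hgi : Integrable g μ :=
      integrable_of_le_of_le hg.aestronglyMeasurable (hlg 0) (hgu 0) (hl 0) (hu 0)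
    refine ⟨hgi, le_antisymm ?_ ?_⟩
    · exact ge_of_tendsto' huL fun n => integral_mono_ae hgi (hu n) (hgu n)
    · exact le_of_tendsto' hlL fun n => integral_mono_ae (hl n) hgi (hlg n)
  obtain ⟨hUi, hUL⟩ := integral_eq (AEMeasurable.iSup fun n => (hl n).aemeasurable)
    (fun n => hchain.mono fun a h => (h n).1)
    (fun n => hchain.mono fun a h => (h 0).2.1.trans ((h 0).2.2.1.trans (h n).2.2.2))
  obtain ⟨hVi, hVL⟩ := integral_eq (AEMeasurable.iInf fun n => (hu n).aemeasurable)
    (fun n => hchain.mono fun a h => ((h n).1.trans (h 0).2.1).trans (h 0).2.2.1)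
    (fun n => hchain.mono fun a h => (h n).2.2.2)
  have hUV : V - U =ᵐ[μ] 0 := by
    refine (integral_eq_zero_iff_of_nonneg_ae ?_ (hVi.sub hUi)).1 ?_
    · exact hchain.mono fun a h => sub_nonneg.2 ((h 0).2.1.trans (h 0).2.2.1)
    · rw [integral_sub' hVi hUi, hUL, hVL, sub_self]
  have hfU : f =ᵐ[μ] U := by
    filter_upwards [hchain, hUV] with a h hVU
    have : V a = U a := sub_eq_zero.1 hVU
    linarith [(h 0).2.1, (h 0).2.2.1]
  rw [integral_congr_ae hfU, hUL]

theorem integral_comp_indepFun_of_countable {Ω E ι : Type*} [MeasurableSpace Ω] [MeasurableSpace E]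
    [MeasurableSpace ι] [Countable ι] [MeasurableSingletonClass ι]
    {P : Measure Ω} [IsFiniteMeasure P] {X : Ω → E} {N : Ω → ι}
    (hX : AEMeasurable X P) (hN : AEMeasurable N P) (hXN : IndepFun X N P)
    {F : E → ι → ℝ} (hF : ∀ k, Measurable fun e => F e k)
    (hint : Integrable (fun a => F (X a) (N a)) P) :
    ∫ a, F (X a) (N a) ∂P = ∫ a, ∫ b, F (X b) (N a) ∂P ∂P := by
  have hFm : Measurable fun p : E × ι => F p.1 p.2 := measurable_from_prod_countable_left hF
  have hXN' : AEMeasurable (fun a => (X a, N a)) P := hX.prodMk hN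
  have hmap := (indepFun_iff_map_prod_eq_prod_map_map hX hN).1 hXN
  have hint' : Integrable (fun p : E × ι => F p.1 p.2) ((P.map X).prod (P.map N)) := by
    rw [← hmap]
    exact (integrable_map_measure hFm.aestronglyMeasurable hXN').2 hint
  calc ∫ a, F (X a) (N a) ∂P
      = ∫ p, F p.1 p.2 ∂((P.map X).prod (P.map N)) := by
        rw [← hmap, integral_map hXN' hFm.aestronglyMeasurable]
    _ = ∫ k, ∫ e, F e k ∂(P.map X) ∂(P.map N) := integral_prod_symm _ hint'
    _ = ∫ a, ∫ b, F (X b) (N a) ∂P ∂P := by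
        rw [integral_map hN (Measurable.of_discrete).aestronglyMeasurable]
        simp_rw [integral_map hX (hF _).aestronglyMeasurable]

section RandomTime

variable {Ω E : Type*} [MeasurableSpace Ω] [MeasurableSpace E] {P : Measure Ω}
  {X : Ω → E} {G : E → ℝ → ℝ} {C : ℝ} {φ : ℝ → ℝ}

theorem measurable_apply_comp_nat (hX : Measurable X) (hG : ∀ t, Measurable fun e => G e t)
    {N : Ω → ℕ} (hN : Measurable N) (t : ℕ → ℝ) :
    Measurable fun a => G (X a) (t (N a)) :=
  (measurable_from_prod_countable_left (f := fun p : E × ℕ => G p.1 (t p.2))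
    fun k => hG (t k)).comp (hX.prodMk hN)

theorem integrable_apply_comp_nat [IsFiniteMeasure P] (hX : Measurable X)
    (hG : ∀ t, Measurable fun e => G e t) (hGC : ∀ a t, 0 ≤ t → ‖G (X a) t‖ ≤ C)
    {N : Ω → ℕ} (hN : Measurable N) {t : ℕ → ℝ} (ht : ∀ k, 0 ≤ t k) :
    Integrable (fun a => G (X a) (t (N a))) P :=
  .of_bound (measurable_apply_comp_nat hX hG hN t).aestronglyMeasurable C
    (.of_forall fun a => hGC a _ (ht _))

theorem integral_apply_comp_nat [IsFiniteMeasure P] (hX : Measurable X)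
    (hG : ∀ t, Measurable fun e => G e t) (hGC : ∀ a t, 0 ≤ t → ‖G (X a) t‖ ≤ C)
    (hGφ : ∀ t, 0 ≤ t → ∫ a, G (X a) t ∂P = φ t)
    {N : Ω → ℕ} (hN : Measurable N) (hXN : IndepFun X N P) {t : ℕ → ℝ} (ht : ∀ k, 0 ≤ t k) :
    ∫ a, G (X a) (t (N a)) ∂P = ∫ a, φ (t (N a)) ∂P := by
  rw [integral_comp_indepFun_of_countable hX.aemeasurable hN.aemeasurable hXN
    (F := fun e k => G e (t k)) (fun k => hG (t k)) (integrable_apply_comp_nat hX hG hGC hN ht)]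
  simp_rw [hGφ _ (ht _)]

theorem tendsto_integral_apply_comp_nat [IsProbabilityMeasure P] (hX : Measurable X)
    (hG : ∀ t, Measurable fun e => G e t) (hGC : ∀ a t, 0 ≤ t → ‖G (X a) t‖ ≤ C)
    (hφ : ContinuousOn φ (Ici 0)) (hGφ : ∀ t, 0 ≤ t → ∫ a, G (X a) t ∂P = φ t)
    {S : Ω → ℝ} (hS : Measurable S) (hS0 : ∀ᵐ a ∂P, 0 ≤ S a) (hXS : IndepFun X S P)
    {ρ : ℕ → ℝ → ℕ} (hρ : ∀ n, Measurable (ρ n)) {t : ℕ → ℕ → ℝ} (ht : ∀ n k, 0 ≤ t n k)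
    (hlim : ∀ x, 0 ≤ x → Tendsto (fun n => t n (ρ n x)) atTop (𝓝 x)) :
    Tendsto (fun n => ∫ a, G (X a) (t n (ρ n (S a))) ∂P) atTop (𝓝 (∫ a, φ (S a) ∂P)) := by
  have hφC : ∀ s, 0 ≤ s → ‖φ s‖ ≤ C := fun s hs => by
    rw [← hGφ s hs]
    have := norm_integral_le_of_norm_le_const (μ := P) (.of_forall fun a => hGC a s hs)
    rwa [probReal_univ, mul_one] at this
  have hdisc : ∀ n, ∫ a, G (X a) (t n (ρ n (S a))) ∂P = ∫ a, φ (t n (ρ n (S a))) ∂P :=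
    fun n => integral_apply_comp_nat hX hG hGC hGφ (N := fun a => ρ n (S a)) ((hρ n).comp hS)
      (hXS.comp measurable_id (hρ n)) (ht n)
  simp_rw [hdisc]
  refine tendsto_integral_of_dominated_convergence (fun _ => C)
    (fun n => ((Measurable.of_discrete (f := fun k => φ (t n k))).comp
      ((hρ n).comp hS)).aestronglyMeasurable)
    (integrable_const C) (fun n => .of_forall fun a => hφC _ (ht _ _)) ?_
  filter_upwards [hS0] with a ha
  exact (hφ (S a) ha).tendsto.comp
    (tendsto_nhdsWithin_iff.2 ⟨hlim _ ha, .of_forall fun n => ht _ _⟩)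

theorem integral_apply_indepFun_of_antitoneOn [IsProbabilityMeasure P] (hX : Measurable X)
    (hG : ∀ t, Measurable fun e => G e t) (hGanti : ∀ a, AntitoneOn (G (X a)) (Ici 0))
    (hGC : ∀ a t, 0 ≤ t → ‖G (X a) t‖ ≤ C)
    (hφ : ContinuousOn φ (Ici 0)) (hGφ : ∀ t, 0 ≤ t → ∫ a, G (X a) t ∂P = φ t)
    {S : Ω → ℝ} (hS : Measurable S) (hS0 : ∀ᵐ a ∂P, 0 ≤ S a) (hXS : IndepFun X S P) :
    ∫ a, G (X a) (S a) ∂P = ∫ a, φ (S a) ∂P := by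
  have htwo : Tendsto (fun n : ℕ => (2 : ℝ) ^ n) atTop atTop :=
    tendsto_pow_atTop_atTop_of_one_lt one_lt_two
  refine integral_eq_of_forall_ae_le_of_tendsto
    (l := fun n a => G (X a) (⌈S a * 2 ^ n⌉₊ / 2 ^ n))
    (u := fun n a => G (X a) (⌊S a * 2 ^ n⌋₊ / 2 ^ n))
    (fun n => integrable_apply_comp_nat hX hG hGC (N := fun a => ⌈S a * 2 ^ n⌉₊)
      (t := fun k => k / 2 ^ n) (by fun_prop) fun k => by positivity)
    (fun n => integrable_apply_comp_nat hX hG hGC (N := fun a => ⌊S a * 2 ^ n⌋₊)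
      (t := fun k => k / 2 ^ n) (by fun_prop) fun k => by positivity)
    (fun n => ?_) (fun n => ?_)
    (tendsto_integral_apply_comp_nat hX hG hGC hφ hGφ hS hS0 hXS
      (ρ := fun n x => ⌈x * 2 ^ n⌉₊) (t := fun n k => k / 2 ^ n) (fun n => by fun_prop)
      (fun n k => by positivity) fun x hx => (tendsto_nat_ceil_mul_div_atTop hx).comp htwo)
    (tendsto_integral_apply_comp_nat hX hG hGC hφ hGφ hS hS0 hXS
      (ρ := fun n x => ⌊x * 2 ^ n⌋₊) (t := fun n k => k / 2 ^ n) (fun n => by fun_prop)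
      (fun n k => by positivity) fun x hx => (tendsto_nat_floor_mul_div_atTop hx).comp htwo)
  all_goals filter_upwards [hS0] with a ha
  · refine hGanti a ha (by positivity : (0 : ℝ) ≤ _) ?_
    rw [le_div_iff₀ (by positivity)]
    exact Nat.le_ceil _
  · refine hGanti a (by positivity : (0 : ℝ) ≤ _) ha ?_
    rw [div_le_iff₀ (by positivity)]
    exact Nat.floor_le (by positivity)

end RandomTime

namespace IsGGSubordinator

variable {Ω : Type*} [MeasurableSpace Ω] {P : Measure Ω} {τ : Ω → ℝ → ℝ} {β : ℝ}

theorem measurable_apply (hτ : IsGGSubordinator P τ β) (t : ℝ) : Measurable fun a => τ a t :=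
  (measurable_pi_apply t).comp hτ.1

theorem mono (hτ : IsGGSubordinator P τ β) (a : Ω) : Monotone (τ a) :=
  hτ.2.2.1 a

theorem nonneg (hτ : IsGGSubordinator P τ β) (a : Ω) {t : ℝ} (ht : 0 ≤ t) : 0 ≤ τ a t :=
  hτ.2.1 a ▸ hτ.mono a ht

theorem norm_exp_neg_mul_sub_mul_le_one (hτ : IsGGSubordinator P τ β) (a : Ω)
    {t y ω₁ ω₂ : ℝ} (ht : 0 ≤ t) (hy : 0 ≤ y) (hω₁ : 0 ≤ ω₁) (hω₂ : 0 ≤ ω₂) :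
    ‖Real.exp (-ω₁ * τ a t - ω₂ * τ a (t * y))‖ ≤ 1 := by
  rw [Real.norm_eq_abs, abs_of_pos (Real.exp_pos _), Real.exp_le_one_iff]
  nlinarith [hτ.nonneg a ht, hτ.nonneg a (mul_nonneg ht hy)]

theorem antitoneOn_exp_neg_mul_sub_mul (hτ : IsGGSubordinator P τ β) (a : Ω)
    {y ω₁ ω₂ : ℝ} (hy : 0 ≤ y) (hω₁ : 0 ≤ ω₁) (hω₂ : 0 ≤ ω₂) :
    AntitoneOn (fun t => Real.exp (-ω₁ * τ a t - ω₂ * τ a (t * y))) (Ici 0) :=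
  fun s _ t _ hst => by
    have h₁ := hτ.mono a hst
    have h₂ := hτ.mono a (mul_le_mul_of_nonneg_right hst hy)
    exact Real.exp_le_exp.2 (by nlinarith)

theorem integral_exp_neg_mul (hτ : IsGGSubordinator P τ β) {t ω : ℝ} (ht : 0 ≤ t)
    (hω : 0 ≤ ω) :
    ∫ a, Real.exp (-ω * τ a t) ∂P = Real.exp (-t * ((1 + ω) ^ β - 1)) := by
  simpa [hτ.2.1] using hτ.2.2.2.2 0 t ω le_rfl ht hω

theorem integral_exp_neg_mul_sub_mul (hτ : IsGGSubordinator P τ β) {s t ω₁ ω₂ : ℝ}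
    (ht : 0 ≤ t) (hts : t ≤ s) (hω₁ : 0 ≤ ω₁) (hω₂ : 0 ≤ ω₂) :
    ∫ a, Real.exp (-ω₁ * τ a s - ω₂ * τ a t) ∂P
      = Real.exp (-t * ((1 + ω₁ + ω₂) ^ β - 1) - (s - t) * ((1 + ω₁) ^ β - 1)) := by
  obtain ⟨-, -, -, hindep, hlap⟩ := id hτ
  have hsplit : ∀ a, Real.exp (-ω₁ * τ a s - ω₂ * τ a t)
      = Real.exp (-(ω₁ + ω₂) * τ a t) * Real.exp (-ω₁ * (τ a s - τ a t)) := fun a => by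
    rw [← Real.exp_add]; ring_nf
  simp_rw [hsplit]
  rw [(hindep t s ht hts).integral_fun_comp_mul_comp
      (f := fun x => Real.exp (-(ω₁ + ω₂) * x)) (g := fun x => Real.exp (-ω₁ * x))
      (hτ.measurable_apply t).aemeasurable
      ((hτ.measurable_apply s).sub (hτ.measurable_apply t)).aemeasurable
      (by fun_prop) (by fun_prop),
    hτ.integral_exp_neg_mul ht (add_nonneg hω₁ hω₂), hlap t s ω₁ ht hts hω₁,
    ← Real.exp_add, add_assoc]
  ring_nf

end IsGGSubordinator

theorem stmt11_general {Ω : Type*} [MeasureSpace Ω] [IsProbabilityMeasure (ℙ : Measure Ω)]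
    (α δ ζ y : ℝ) (hα0 : 0 < α)
    (hy : y ∈ Set.Icc (0 : ℝ) 1)
    (τ : Ω → ℝ → ℝ) (hτ : IsGGSubordinator ℙ τ α)
    (S : Ω → ℝ) (hSm : Measurable S) (hSnn : ∀ᵐ a ∂ℙ, 0 ≤ S a)
    (hSlap : ∀ u : ℝ, 0 ≤ u →
      ∫ a, Real.exp (-u * S a) ∂ℙ = Real.exp (-ζ * ((1 + u) ^ δ - 1)))
    (hind : IndepFun (fun a => τ a) S ℙ)
    (ω₁ ω₂ : ℝ) (hω₁ : 0 ≤ ω₁) (hω₂ : 0 ≤ ω₂) :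
    -Real.log (∫ a, Real.exp (-ω₁ * τ a (S a) - ω₂ * τ a (S a * y)) ∂ℙ)
      = ζ * ((y * (1 + ω₁ + ω₂) ^ α + (1 - y) * (1 + ω₁) ^ α) ^ δ - 1) := by
  obtain ⟨hy0, hy1⟩ := hy
  set c := y * ((1 + ω₁ + ω₂) ^ α - 1) + (1 - y) * ((1 + ω₁) ^ α - 1) with hc_def
  have hc : 0 ≤ c := by
    have h₁ : (1 : ℝ) ≤ (1 + ω₁ + ω₂) ^ α := Real.one_le_rpow (by linarith) hα0.le
    have h₂ : (1 : ℝ) ≤ (1 + ω₁) ^ α := Real.one_le_rpow (by linarith) hα0.le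
    nlinarith
  have hlaw : ∀ t, 0 ≤ t → ∫ a, Real.exp (-ω₁ * τ a t - ω₂ * τ a (t * y)) ∂ℙ
      = Real.exp (-c * t) := fun t ht => by
    rw [hτ.integral_exp_neg_mul_sub_mul (mul_nonneg ht hy0)
      (mul_le_of_le_one_right ht hy1) hω₁ hω₂, hc_def]
    ring_nf
  rw [integral_apply_indepFun_of_antitoneOn
      (G := fun f t => Real.exp (-ω₁ * f t - ω₂ * f (t * y))) hτ.1 (fun t => by fun_prop)
      (fun a => hτ.antitoneOn_exp_neg_mul_sub_mul a hy0 hω₁ hω₂)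
      (fun a t ht => hτ.norm_exp_neg_mul_sub_mul_le_one a ht hy0 hω₁ hω₂) (by fun_prop)
      hlaw hSm hSnn hind,
    hSlap c hc, Real.log_exp, hc_def]
  ring_nf

/-- Joint Laplace transform of `(τ_α(τ_δ(ζ)), τ_α(τ_δ(ζ)y))`:
with `S = τ_δ(ζ)` having Laplace transform `e^{-ζ((1+u)^δ-1)}`, independent of the
generalized gamma subordinator `τ_α`,
`-log E[exp(-ω₁ τ_α(S) - ω₂ τ_α(Sy))] = ζ[(y(1+ω₁+ω₂)^α + (1-y)(1+ω₁)^α)^δ - 1]`. -/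
theorem stmt11 {Ω : Type*} [MeasureSpace Ω] [IsProbabilityMeasure (ℙ : Measure Ω)]
    (α δ ζ y : ℝ) (hα0 : 0 < α) (hα1 : α < 1) (hδ0 : 0 < δ) (hδ1 : δ < 1)
    (hζ : 0 < ζ) (hy : y ∈ Set.Icc (0 : ℝ) 1)
    (τ : Ω → ℝ → ℝ) (hτ : IsGGSubordinator ℙ τ α)
    (S : Ω → ℝ) (hSm : Measurable S) (hSnn : ∀ᵐ a ∂ℙ, 0 ≤ S a)
    (hSlap : ∀ u : ℝ, 0 ≤ u →
      ∫ a, Real.exp (-u * S a) ∂ℙ = Real.exp (-ζ * ((1 + u) ^ δ - 1)))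
    (hind : IndepFun (fun a => τ a) S ℙ)
    (ω₁ ω₂ : ℝ) (hω₁ : 0 ≤ ω₁) (hω₂ : 0 ≤ ω₂) :
    -Real.log (∫ a, Real.exp (-ω₁ * τ a (S a) - ω₂ * τ a (S a * y)) ∂ℙ)
      = ζ * ((y * (1 + ω₁ + ω₂) ^ α + (1 - y) * (1 + ω₁) ^ α) ^ δ - 1) :=
  stmt11_general α δ ζ y hα0 hy τ hτ S hSm hSnn hSlap hind ω₁ ω₂ hω₁ hω₂
end
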